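/- Let φ: G → G be an automorphism of an abelian group and n ≥ 1 a natural number. Then φ is expansive if and only if φ^n is expansive; moreover, if S is a generator for φ^n, then ∑_{|k|≤n} φ^k(S) is a generator for φ. -/

import Mathlib

/-- `S` is a positive generator for `φ`. -/
def IsPositiveGenerator {G : Type*} [AddCommGroup G] (φ : AddMonoid.End G)
    (S : AddSubgroup G) : Prop :=
  ∀ F : AddSubgroup G, (F : Set G).Finite →
    ∃ n : ℕ, F ≤ ⨆ k ∈ Finset.range (n + 1), S.map (φ ^ k)

/-- `φ` is positively expansive: it has a finite positive generator. -/
def PositivelyExpansive {G : Type*} [AddCommGroup G] (φ : AddMonoid.End G) : Prop :=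
  ∃ S : AddSubgroup G, (S : Set G).Finite ∧ IsPositiveGenerator φ S
/-- `S` is a generator for the automorphism `φ`. -/
def IsGenerator {G : Type*} [AddCommGroup G] (φ : AddAut G) (S : AddSubgroup G) : Prop :=
  ∀ F : AddSubgroup G, (F : Set G).Finite →
    ∃ n : ℕ, F ≤ ⨆ k ∈ Finset.Icc (-(n : ℤ)) (n : ℤ), S.map (k • φ).toAddMonoidHom

/-- An automorphism `φ` is expansive if it has a finite generator. -/
def Expansive {G : Type*} [AddCommGroup G] (φ : AddAut G) : Prop :=
  ∃ S : AddSubgroup G, (S : Set G).Finite ∧ IsGenerator φ S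

/-!
Write `W(φ, S, m) = ∑_{|k| ≤ m} φ^k(S)`. Every term of `W(φⁿ, S, m)` occurs in `W(φ, S, nm)`,
so a generator for `φⁿ` is already a generator for `φ`, and so is any larger subgroup such as
`W(φ, S, n)`. Conversely, dividing `k = nj + r` with `0 ≤ r < n` shows
`W(φ, S, m) ≤ W(φⁿ, W(φ, S, n), m)`, so `W(φ, S, n)`, which is finite since `G` is abelian,
generates for `φⁿ` whenever `S` generates for `φ`.
-/

/-- The subgroup `∑_{|k| ≤ m} φ^k(S)`; addition in `AddAut G` is composition, so `k • φ` is
`φ^k`. -/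
def orbitSup {G : Type*} [AddGroup G] (φ : AddAut G) (S : AddSubgroup G) (m : ℕ) :
    AddSubgroup G :=
  ⨆ k ∈ Finset.Icc (-(m : ℤ)) m, S.map (k • φ).toAddMonoidHom

lemma zsmul_nsmul {α : Type*} [SubtractionMonoid α] (a : α) (n : ℕ) (j : ℤ) :
    j • n • a = ((n : ℤ) * j) • a := by
  rw [← natCast_zsmul, mul_zsmul']

section OrbitSup

variable {G : Type*} [AddGroup G] {φ : AddAut G} {S T : AddSubgroup G} {m n : ℕ}

lemma map_map_zsmul (φ : AddAut G) (S : AddSubgroup G) (a b : ℤ) :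
    (S.map (a • φ).toAddMonoidHom).map (b • φ).toAddMonoidHom
      = S.map ((b + a) • φ).toAddMonoidHom := by
  rw [AddSubgroup.map_map, add_zsmul]
  rfl

lemma map_le_orbitSup {k : ℤ} (hk : k ∈ Finset.Icc (-(m : ℤ)) m) :
    S.map (k • φ).toAddMonoidHom ≤ orbitSup φ S m :=
  le_iSup₂ (f := fun k (_ : k ∈ Finset.Icc (-(m : ℤ)) m) => S.map (k • φ).toAddMonoidHom) k hk

lemma orbitSup_le_iff :
    orbitSup φ S m ≤ T ↔ ∀ k ∈ Finset.Icc (-(m : ℤ)) m, S.map (k • φ).toAddMonoidHom ≤ T :=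
  iSup₂_le_iff

lemma le_orbitSup : S ≤ orbitSup φ S m := by
  have h := map_le_orbitSup (φ := φ) (S := S) (k := 0) (by simp : (0 : ℤ) ∈ Finset.Icc (-(m : ℤ)) m)
  rw [zero_zsmul] at h
  exact (AddSubgroup.map_id S).ge.trans h

lemma orbitSup_mono (h : S ≤ T) : orbitSup φ S m ≤ orbitSup φ T m :=
  orbitSup_le_iff.2 fun _ hk => (AddSubgroup.map_mono h).trans (map_le_orbitSup hk)

lemma orbitSup_nsmul_le : orbitSup (n • φ) S m ≤ orbitSup φ S (n * m) := by
  refine orbitSup_le_iff.2 fun j hj => ?_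
  rw [zsmul_nsmul]
  refine map_le_orbitSup ?_
  rw [Finset.mem_Icc] at hj ⊢
  push_cast
  constructor <;> nlinarith [hj.1, hj.2, Int.natCast_nonneg n]

lemma orbitSup_le_orbitSup_nsmul (hn : 1 ≤ n) :
    orbitSup φ S m ≤ orbitSup (n • φ) (orbitSup φ S n) m := by
  refine orbitSup_le_iff.2 fun k hk => ?_
  have hn' : (0 : ℤ) < n := by exact_mod_cast hn
  set j := k / n
  set r := k % n
  have hr : r ∈ Finset.Icc (-(n : ℤ)) n := by
    have := Int.emod_nonneg k hn'.ne'
    have := Int.emod_lt_of_pos k hn'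
    rw [Finset.mem_Icc]
    omega
  have hj : j ∈ Finset.Icc (-(m : ℤ)) m := by
    rw [Finset.mem_Icc, ← abs_le]
    exact (Int.abs_ediv_le_abs k n).trans (abs_le.2 (Finset.mem_Icc.1 hk))
  calc S.map (k • φ).toAddMonoidHom
      = (S.map (r • φ).toAddMonoidHom).map (j • (n • φ)).toAddMonoidHom := by
        rw [zsmul_nsmul, map_map_zsmul, Int.mul_ediv_add_emod]
    _ ≤ (orbitSup φ S n).map (j • (n • φ)).toAddMonoidHom :=
        AddSubgroup.map_mono (map_le_orbitSup hr)
    _ ≤ orbitSup (n • φ) (orbitSup φ S n) m := map_le_orbitSup hj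

end OrbitSup

section Generators

variable {G : Type*} [AddCommGroup G] {φ : AddAut G} {S T : AddSubgroup G} {n : ℕ}

lemma AddSubgroup.finite_biSup {ι : Type*} (s : Finset ι) (H : ι → AddSubgroup G)
    (h : ∀ i ∈ s, (H i : Set G).Finite) : ((⨆ i ∈ s, H i : AddSubgroup G) : Set G).Finite := by
  rw [← Finset.sup_eq_iSup]
  refine Finset.sup_induction (p := fun K : AddSubgroup G => (K : Set G).Finite) (by simp)
    (fun A hA B hB => ?_) h
  rw [AddSubgroup.add_normal]
  exact hA.add hB

lemma orbitSup_finite (hS : (S : Set G).Finite) (m : ℕ) : (orbitSup φ S m : Set G).Finite :=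
  AddSubgroup.finite_biSup _ _ fun k _ => by
    rw [AddSubgroup.coe_map]
    exact hS.image _

lemma IsGenerator.mono (hS : IsGenerator φ S) (h : S ≤ T) : IsGenerator φ T := fun F hF =>
  (hS F hF).imp fun _ hm => hm.trans (orbitSup_mono h)

lemma IsGenerator.of_nsmul (hS : IsGenerator (n • φ) S) : IsGenerator φ S := fun F hF =>
  (hS F hF).imp' (n * ·) fun _ hm => hm.trans orbitSup_nsmul_le

lemma IsGenerator.nsmul_orbitSup (hS : IsGenerator φ S) (hn : 1 ≤ n) :
    IsGenerator (n • φ) (orbitSup φ S n) := fun F hF =>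
  (hS F hF).imp fun _ hm => hm.trans (orbitSup_le_orbitSup_nsmul hn)

end Generators

theorem stmt12 {G : Type*} [AddCommGroup G] (φ : AddAut G) (n : ℕ) (hn : 1 ≤ n) :
    (Expansive φ ↔ Expansive (n • φ)) ∧
      ∀ S : AddSubgroup G, (S : Set G).Finite → IsGenerator (n • φ) S →
        IsGenerator φ
          (⨆ k ∈ Finset.Icc (-(n : ℤ)) (n : ℤ), S.map ((k • φ).toAddMonoidHom)) := by
  refine ⟨⟨?_, ?_⟩, fun S _ hS => hS.of_nsmul.mono le_orbitSup⟩
  · rintro ⟨S, hS, hgen⟩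
    exact ⟨orbitSup φ S n, orbitSup_finite hS n, hgen.nsmul_orbitSup hn⟩
  · rintro ⟨S, hS, hgen⟩
    exact ⟨S, hS, hgen.of_nsmul⟩
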